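/- arXiv:2203.08661 — 4 statements merged into one kernel-verified Lean document; each statement's English description precedes it below -/
import Mathlib

section
/- Let {τ_k}_{k=N}^M be a geometrically increasing sequence. Then for every q ∈ (0,∞] and every nonnegative sequence {a_k}_{k=N}^M, the ℓ^q norm of {τ_k · sup_{k ≤ m ≤ M} a_m} is equivalent (with constants depending only on α and q) to the ℓ^q norm of {τ_k a_k}. -/
/-!
For `m ≥ k` geometric growth gives `τ k ≤ α⁻ⁿ τ (k + n)` with `n = m - k`, so
`τ k · sup_{m ≥ k} a m ≤ sup_n α⁻ⁿ (τ a)(k + n)`. For `q = ∞` the right side is at most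
`‖τ a‖_∞`. For finite `q`, the `q`-th power of that supremum is at most the sum
`∑ₙ α^{-nq} (τ a)(k + n)^q`; summing over `k` and swapping the sums gives
`∑ₖ (τ k · sup_{m ≥ k} a m)^q ≤ (1 - α^{-q})⁻¹ ∑ₖ (τ k a k)^q`.
The lower bound is the pointwise `a k ≤ sup_{m ≥ k} a m`.
-/

open MeasureTheory Set ENNReal

noncomputable section

/-- The `ℓ^q` norm of a sequence indexed by a subset `S` of the integers. -/
def lqNorm (q : ℝ≥0∞) (S : Set ℤ) (a : ℤ → ℝ≥0∞) : ℝ≥0∞ :=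
  if q = ∞ then ⨆ k ∈ S, a k
  else (∑' k : S, a (k : ℤ) ^ q.toReal) ^ (1 / q.toReal)

/-- Indices `k ∈ ℤ` with `N ≤ k ≤ M`, where `N, M ∈ ℤ ∪ {−∞, +∞}` (as extended reals). -/
def idxSet (N M : EReal) : Set ℤ := {k : ℤ | N ≤ ((k : ℝ) : EReal) ∧ ((k : ℝ) : EReal) ≤ M}

lemma idxSet_ordConnected (N M : EReal) : (idxSet N M).OrdConnected :=
  ⟨fun _ hk _ hm _ hj =>
    ⟨hk.1.trans (by exact_mod_cast hj.1), le_trans (by exact_mod_cast hj.2) hm.2⟩⟩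

lemma lqNorm_top (S : Set ℤ) (a : ℤ → ℝ≥0∞) : lqNorm ∞ S a = ⨆ k ∈ S, a k := if_pos rfl

lemma lqNorm_of_ne_top {q : ℝ≥0∞} (hq : q ≠ ∞) (S : Set ℤ) (a : ℤ → ℝ≥0∞) :
    lqNorm q S a = (∑' k : S, a k ^ q.toReal) ^ (1 / q.toReal) := if_neg hq

lemma lqNorm_mono (q : ℝ≥0∞) (S : Set ℤ) {a b : ℤ → ℝ≥0∞} (h : ∀ k ∈ S, a k ≤ b k) :
    lqNorm q S a ≤ lqNorm q S b := by
  unfold lqNorm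
  split
  · exact iSup₂_mono h
  · refine ENNReal.rpow_le_rpow (ENNReal.tsum_le_tsum fun k => ?_) (by positivity)
    exact ENNReal.rpow_le_rpow (h k k.2) ENNReal.toReal_nonneg

lemma lqNorm_le_lqNorm_mul_iSup_tail (q : ℝ≥0∞) (S : Set ℤ) (τ a : ℤ → ℝ≥0∞) :
    lqNorm q S (fun k => τ k * a k) ≤
      lqNorm q S (fun k => τ k * ⨆ m ∈ {m : ℤ | m ∈ S ∧ k ≤ m}, a m) :=
  lqNorm_mono q S fun k hk => mul_le_mul_right
    (le_iSup₂ (f := fun m (_ : m ∈ {m : ℤ | m ∈ S ∧ k ≤ m}) => a m) k ⟨hk, le_rfl⟩) _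

lemma iSup_rpow_le_tsum_rpow {ι : Type*} (x : ι → ℝ≥0∞) {t : ℝ} (ht : 0 < t) :
    (⨆ i, x i) ^ t ≤ ∑' i, x i ^ t := by
  have h := (ENNReal.orderIsoRpow t ht).map_iSup x
  simp only [ENNReal.orderIsoRpow_apply] at h
  rw [h]
  exact iSup_le fun i => ENNReal.le_tsum (f := fun i => x i ^ t) i

lemma tsum_tsum_geometric_mul_shift (r : ℝ≥0∞) (f : ℤ → ℝ≥0∞) :
    ∑' k : ℤ, ∑' n : ℕ, r ^ n * f (k + n) = (1 - r)⁻¹ * ∑' k, f k := by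
  calc ∑' k : ℤ, ∑' n : ℕ, r ^ n * f (k + n)
      = ∑' n : ℕ, r ^ n * ∑' k : ℤ, f (k + n) := by
        rw [ENNReal.tsum_comm]; simp only [ENNReal.tsum_mul_left]
    _ = ∑' n : ℕ, r ^ n * ∑' k : ℤ, f k := by
        congr! 3 with n
        exact (Equiv.addRight (n : ℤ)).tsum_eq f
    _ = (1 - r)⁻¹ * ∑' k, f k := by rw [ENNReal.tsum_mul_right, ENNReal.tsum_geometric]

section TailSupremum

variable {S : Set ℤ} {τ : ℤ → ℝ≥0∞} {r : ℝ≥0∞}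

lemma le_pow_mul_of_le_mul_succ (hS : S.OrdConnected)
    (hτ : ∀ k ∈ S, k - 1 ∈ S → τ (k - 1) ≤ r * τ k) {k : ℤ} (hk : k ∈ S) :
    ∀ n : ℕ, k + n ∈ S → τ k ≤ r ^ n * τ (k + n) := by
  intro n
  induction n with
  | zero => simp
  | succ n ih =>
    intro hkn
    rw [Nat.cast_succ, ← add_assoc] at hkn ⊢
    have hmid : k + n ∈ S := hS.out hk hkn ⟨by omega, by omega⟩
    calc τ k ≤ r ^ n * τ (k + n) := ih hmid
      _ ≤ r ^ n * (r * τ (k + n + 1)) := by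
        gcongr; simpa using hτ (k + n + 1) hkn (by simpa using hmid)
      _ = r ^ (n + 1) * τ (k + n + 1) := by ring

lemma mul_iSup_tail_le (hS : S.OrdConnected)
    (hτ : ∀ k ∈ S, k - 1 ∈ S → τ (k - 1) ≤ r * τ k) (a : ℤ → ℝ≥0∞) {k : ℤ} (hk : k ∈ S) :
    τ k * ⨆ m ∈ {m : ℤ | m ∈ S ∧ k ≤ m}, a m ≤
      ⨆ n : ℕ, r ^ n * S.indicator (fun m => τ m * a m) (k + n) := by
  simp only [ENNReal.mul_iSup]
  refine iSup₂_le fun m ⟨hm, hkm⟩ => ?_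
  obtain ⟨n, rfl⟩ := Int.le.dest hkm
  refine le_iSup_of_le n ?_
  rw [S.indicator_of_mem hm, ← mul_assoc]
  exact mul_le_mul_left (le_pow_mul_of_le_mul_succ hS hτ hk n hm) _

lemma lqNorm_top_mul_iSup_tail_le (hS : S.OrdConnected)
    (hτ : ∀ k ∈ S, k - 1 ∈ S → τ (k - 1) ≤ r * τ k) (hr : r ≤ 1) (a : ℤ → ℝ≥0∞) :
    lqNorm ∞ S (fun k => τ k * ⨆ m ∈ {m : ℤ | m ∈ S ∧ k ≤ m}, a m) ≤
      lqNorm ∞ S (fun k => τ k * a k) := by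
  rw [lqNorm_top, lqNorm_top]
  refine iSup₂_le fun k hk => (mul_iSup_tail_le hS hτ a hk).trans (iSup_le fun n => ?_)
  calc r ^ n * S.indicator (fun m => τ m * a m) (k + n)
      ≤ S.indicator (fun m => τ m * a m) (k + n) :=
        mul_le_of_le_one_left' (pow_le_one₀ zero_le hr)
    _ ≤ ⨆ m ∈ S, τ m * a m :=
      Set.indicator_le (fun m hm => le_iSup₂ (f := fun m (_ : m ∈ S) => τ m * a m) m hm) _

lemma tsum_rpow_mul_iSup_tail_le (hS : S.OrdConnected)
    (hτ : ∀ k ∈ S, k - 1 ∈ S → τ (k - 1) ≤ r * τ k) (a : ℤ → ℝ≥0∞) {t : ℝ} (ht : 0 < t) :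
    ∑' k : S, (τ k * ⨆ m ∈ {m : ℤ | m ∈ S ∧ k ≤ m}, a m) ^ t ≤
      (1 - r ^ t)⁻¹ * ∑' k : S, (τ k * a k) ^ t := by
  let g := S.indicator (fun m => τ m * a m)
  have hg : ∀ k, g k ^ t = S.indicator (fun m => (τ m * a m) ^ t) k := fun k =>
    congr_fun (Set.indicator_comp_of_zero (g := fun x : ℝ≥0∞ => x ^ t)
      (ENNReal.zero_rpow_of_pos ht)).symm k
  calc ∑' k : S, (τ k * ⨆ m ∈ {m : ℤ | m ∈ S ∧ k ≤ m}, a m) ^ t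
      ≤ ∑' k : S, ∑' n : ℕ, (r ^ t) ^ n * g (k + n) ^ t := by
        refine ENNReal.tsum_le_tsum fun k => ?_
        refine (ENNReal.rpow_le_rpow (mul_iSup_tail_le hS hτ a k.2) ht.le).trans ?_
        refine (iSup_rpow_le_tsum_rpow _ ht).trans_eq ?_
        simp only [ENNReal.mul_rpow_of_nonneg _ _ ht.le, ← ENNReal.rpow_natCast,
          ← ENNReal.rpow_mul, mul_comm, g]
    _ ≤ ∑' k : ℤ, ∑' n : ℕ, (r ^ t) ^ n * g (k + n) ^ t := by
        rw [tsum_subtype S fun k : ℤ => ∑' n : ℕ, (r ^ t) ^ n * g (k + n) ^ t]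
        exact ENNReal.tsum_le_tsum fun k => Set.indicator_le_self _ _ k
    _ = (1 - r ^ t)⁻¹ * ∑' k : S, (τ k * a k) ^ t := by
        rw [tsum_tsum_geometric_mul_shift (r ^ t) fun k => g k ^ t,
          tsum_subtype S fun k : ℤ => (τ k * a k) ^ t]
        simp only [hg]

lemma lqNorm_mul_iSup_tail_le {q : ℝ≥0∞} (hq0 : 0 < q) (hq : q ≠ ∞) (hS : S.OrdConnected)
    (hτ : ∀ k ∈ S, k - 1 ∈ S → τ (k - 1) ≤ r * τ k) (a : ℤ → ℝ≥0∞) :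
    lqNorm q S (fun k => τ k * ⨆ m ∈ {m : ℤ | m ∈ S ∧ k ≤ m}, a m) ≤
      (1 - r ^ q.toReal)⁻¹ ^ (1 / q.toReal) * lqNorm q S (fun k => τ k * a k) := by
  have ht : 0 < q.toReal := ENNReal.toReal_pos hq0.ne' hq
  rw [lqNorm_of_ne_top hq, lqNorm_of_ne_top hq,
    ← ENNReal.mul_rpow_of_nonneg _ _ (by positivity)]
  exact ENNReal.rpow_le_rpow (tsum_rpow_mul_iSup_tail_le hS hτ a ht) (by positivity)

end TailSupremum

/-- For a geometrically increasing sequence `{τ_k}_{k=N}^M` (with ratio `α > 1`), the `ℓ^q`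
norm of `{τ_k · sup_{k ≤ m ≤ M} a_m}` is equivalent to the `ℓ^q` norm of `{τ_k a_k}`, with
constants depending only on `α` and `q`. -/
theorem stmt2 (q : ℝ≥0∞) (hq : 0 < q) (α : ℝ) (hα : 1 < α) :
    ∃ c C : ℝ≥0∞, 0 < c ∧ C < ∞ ∧
      ∀ N M : EReal, N ≤ M → ∀ τ : ℤ → ℝ≥0∞,
        (∀ k ∈ idxSet N M, 0 < τ k ∧ τ k < ∞) →
        (∀ k : ℤ, k ∈ idxSet N M → (k - 1) ∈ idxSet N M →
          ENNReal.ofReal α * τ (k - 1) ≤ τ k) →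
        ∀ a : ℤ → ℝ≥0∞,
          c * lqNorm q (idxSet N M) (fun k => τ k * a k) ≤
              lqNorm q (idxSet N M)
                (fun k => τ k * ⨆ m ∈ {m : ℤ | m ∈ idxSet N M ∧ k ≤ m}, a m) ∧
            lqNorm q (idxSet N M)
                (fun k => τ k * ⨆ m ∈ {m : ℤ | m ∈ idxSet N M ∧ k ≤ m}, a m) ≤
              C * lqNorm q (idxSet N M) (fun k => τ k * a k) := by
  have hα0 : ENNReal.ofReal α ≠ 0 := ENNReal.ofReal_ne_zero_iff.mpr (by linarith)
  have hr : (ENNReal.ofReal α)⁻¹ < 1 := ENNReal.inv_lt_one.mpr (ENNReal.one_lt_ofReal.mpr hα)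
  have ratio {N M : EReal} {τ : ℤ → ℝ≥0∞}
      (hτ : ∀ k : ℤ, k ∈ idxSet N M → (k - 1) ∈ idxSet N M →
        ENNReal.ofReal α * τ (k - 1) ≤ τ k) :
      ∀ k ∈ idxSet N M, k - 1 ∈ idxSet N M → τ (k - 1) ≤ (ENNReal.ofReal α)⁻¹ * τ k :=
    fun k hk hk1 => (ENNReal.mul_le_iff_le_inv hα0 ENNReal.ofReal_ne_top).mp (hτ k hk hk1)
  by_cases hq_top : q = ∞
  · subst hq_top
    refine ⟨1, 1, one_pos, one_lt_top, fun N M _ τ _ hτ a => ?_⟩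
    simp only [one_mul]
    exact ⟨lqNorm_le_lqNorm_mul_iSup_tail _ _ τ a,
      lqNorm_top_mul_iSup_tail_le (idxSet_ordConnected N M) (ratio hτ) hr.le a⟩
  · have hr_pow : (ENNReal.ofReal α)⁻¹ ^ q.toReal < 1 :=
      ENNReal.rpow_lt_one hr (ENNReal.toReal_pos hq.ne' hq_top)
    refine ⟨1, (1 - (ENNReal.ofReal α)⁻¹ ^ q.toReal)⁻¹ ^ (1 / q.toReal), one_pos,
      ENNReal.rpow_lt_top_of_nonneg (by positivity)
        (ENNReal.inv_ne_top.mpr (tsub_pos_of_lt hr_pow).ne'),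
      fun N M _ τ _ hτ a => ?_⟩
    rw [one_mul]
    exact ⟨lqNorm_le_lqNorm_mul_iSup_tail _ _ τ a,
      lqNorm_mul_iSup_tail_le hq hq_top (idxSet_ordConnected N M) (ratio hτ) a⟩
end
end

section
/- Suppose 0 < p, r < ∞ and the weighted discrete embedding ℓ^p({v_k}) ↪ ℓ^r({w_k}) holds with norm C, i.e., (∑_k |a_k w_k|^r)^{1/r} ≤ C (∑_k |a_k v_k|^p)^{1/p} for all sequences {a_k}. Then ‖{w_k / v_k}‖_{ℓ^ρ} ≤ C, where 1/ρ = (1/r − 1/p)_+ (with ℓ^∞ meaning the supremum when r ≥ p). -/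
open MeasureTheory Set ENNReal

noncomputable section

lemma lqNorm_eq_sum_of_support_subset {q : ℝ≥0∞} (hq0 : q ≠ 0) (hq : q ≠ ∞) {S : Set ℤ}
    {G : Finset ℤ} (hGS : ↑G ⊆ S) {f : ℤ → ℝ≥0∞} (hf : ∀ k ∉ G, f k = 0) :
    lqNorm q S f = (∑ k ∈ G, f k ^ q.toReal) ^ (1 / q.toReal) := by
  have hq_pos : 0 < q.toReal := ENNReal.toReal_pos hq0 hq
  rw [lqNorm, if_neg hq, tsum_subtype S (fun k => f k ^ q.toReal), tsum_eq_sum (s := G)]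
  · rw [Finset.sum_congr rfl fun k hk => indicator_of_mem (hGS hk) _]
  · intro k hk
    simp [hf k hk, ENNReal.zero_rpow_of_pos hq_pos]

lemma le_mul_of_lqNorm_le_mul {S : Set ℤ} {v w : ℤ → ℝ≥0∞} {p r C : ℝ≥0∞}
    (hp0 : p ≠ 0) (hp : p ≠ ∞) (hr0 : r ≠ 0) (hr : r ≠ ∞)
    (hemb : ∀ a : ℤ → ℝ≥0∞,
      lqNorm r S (fun k => a k * w k) ≤ C * lqNorm p S (fun k => a k * v k))
    {k₀ : ℤ} (hk₀ : k₀ ∈ S) : w k₀ ≤ C * v k₀ := by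
  have hsingle : ∀ {q : ℝ≥0∞}, q ≠ 0 → q ≠ ∞ → ∀ u : ℤ → ℝ≥0∞,
      lqNorm q S (fun k => (if k = k₀ then 1 else 0) * u k) = u k₀ := by
    intro q hq0 hq u
    rw [lqNorm_eq_sum_of_support_subset hq0 hq (G := {k₀}) (by simpa using hk₀)
      (fun k hk => by simp [Finset.notMem_singleton.mp hk])]
    simp [← ENNReal.rpow_mul, mul_inv_cancel₀ (ENNReal.toReal_pos hq0 hq).ne']
  simpa only [hsingle hr0 hr, hsingle hp0 hp] using hemb fun k => if k = k₀ then 1 else 0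

lemma ENNReal.rpow_div_mul_eq_rpow_add_one (w v : ℝ≥0∞) {s : ℝ} (hs : 0 ≤ s) :
    (w / v) ^ s / v * w = (w / v) ^ (s + 1) := by
  rw [ENNReal.rpow_add_of_nonneg _ _ hs zero_le_one, ENNReal.rpow_one, div_eq_mul_inv,
    div_eq_mul_inv, mul_assoc, mul_comm v⁻¹]

lemma ENNReal.rpow_div_div_mul_cancel {w v : ℝ≥0∞} (hv : v = 0 → w = 0) {s : ℝ} (hs : 0 < s) :
    (w / v) ^ s / v * v = (w / v) ^ s := by
  by_cases hv0 : v = 0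
  · simp [hv0, hv hv0, ENNReal.zero_rpow_of_pos hs]
  by_cases hv_top : v = ∞
  · simp [hv_top, ENNReal.zero_rpow_of_pos hs]
  exact ENNReal.div_mul_cancel hv0 hv_top

lemma ENNReal.le_rpow_of_rpow_le_mul_rpow {T C : ℝ≥0∞} {P Q R : ℝ} (hP : 0 < P) (hQ : 0 < Q)
    (hPQR : 1 / R = 1 / P + 1 / Q) (hT : T ≠ ∞) (h : T ^ (1 / R) ≤ C * T ^ (1 / P)) :
    T ≤ C ^ Q := by
  rcases eq_or_ne T 0 with rfl | hT0
  · exact zero_le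
  rw [hPQR, ENNReal.rpow_add _ _ hT0 hT, mul_comm C,
    ENNReal.mul_le_mul_iff_right (ENNReal.rpow_pos (pos_iff_ne_zero.mpr hT0) hT).ne'
      (ENNReal.rpow_ne_top_of_nonneg (by positivity) hT)] at h
  calc T = (T ^ (1 / Q)) ^ Q := by
          rw [← ENNReal.rpow_mul, one_div_mul_cancel hQ.ne', ENNReal.rpow_one]
    _ ≤ C ^ Q := ENNReal.rpow_le_rpow h hQ.le

lemma ENNReal.tsum_subtype_le_of_sum_le {α : Type*} {S : Set α} {g : α → ℝ≥0∞} {c : ℝ≥0∞}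
    (h : ∀ G : Finset α, ↑G ⊆ S → ∑ k ∈ G, g k ≤ c) : ∑' k : S, g k ≤ c := by
  rw [ENNReal.tsum_eq_iSup_sum]
  refine iSup_le fun F => ?_
  have hF := h (F.map (Function.Embedding.subtype _)) (by simp)
  rwa [Finset.sum_map] at hF

lemma ENNReal.inv_eq_inv_add_inv_of_one_div_eq_sub {p r ρ : ℝ≥0∞}
    (hρ : 1 / ρ = 1 / r - 1 / p) (hρ_top : ρ ≠ ∞) : r⁻¹ = p⁻¹ + ρ⁻¹ := by
  rw [one_div, one_div, one_div] at hρ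
  have hlt : p⁻¹ < r⁻¹ := tsub_pos_iff_lt.mp (hρ ▸ ENNReal.inv_pos.mpr hρ_top)
  rw [hρ, add_tsub_cancel_of_le hlt.le]

lemma ENNReal.one_div_toReal_eq_add_of_inv_eq_add {p r ρ : ℝ≥0∞} (h : r⁻¹ = p⁻¹ + ρ⁻¹)
    (hp0 : p ≠ 0) (hρ0 : ρ ≠ 0) : 1 / r.toReal = 1 / p.toReal + 1 / ρ.toReal := by
  simp only [one_div, ← ENNReal.toReal_inv]
  rw [h, ENNReal.toReal_add (ENNReal.inv_ne_top.mpr hp0) (ENNReal.inv_ne_top.mpr hρ0)]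

lemma tsum_div_rpow_le_of_lqNorm_le_mul {S : Set ℤ} {v w : ℤ → ℝ≥0∞} {p r C : ℝ≥0∞} {Q : ℝ}
    (hp0 : p ≠ 0) (hp : p ≠ ∞) (hr0 : r ≠ 0) (hr : r ≠ ∞) (hQ : 0 < Q)
    (hexp : 1 / r.toReal = 1 / p.toReal + 1 / Q)
    (hemb : ∀ a : ℤ → ℝ≥0∞,
      lqNorm r S (fun k => a k * w k) ≤ C * lqNorm p S (fun k => a k * v k)) :
    ∑' k : S, (w k / v k) ^ Q ≤ C ^ Q := by
  set P := p.toReal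
  set R := r.toReal
  have hP : 0 < P := ENNReal.toReal_pos hp0 hp
  have hR : 0 < R := ENNReal.toReal_pos hr0 hr
  rcases eq_or_ne C ∞ with rfl | hC
  · simp [ENNReal.top_rpow_of_pos hQ]
  have hwv : ∀ k ∈ S, w k ≤ C * v k := fun k hk => le_mul_of_lqNorm_le_mul hp0 hp hr0 hr hemb hk
  refine ENNReal.tsum_subtype_le_of_sum_le (g := fun k => (w k / v k) ^ Q) fun G hGS => ?_
  set T := ∑ k ∈ G, (w k / v k) ^ Q
  have hT : T ≠ ∞ := ENNReal.sum_ne_top.mpr fun k hk =>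
    ENNReal.rpow_ne_top_of_nonneg hQ.le
      (ne_top_of_le_ne_top hC (ENNReal.div_le_of_le_mul (hwv k (hGS hk))))
  let a : ℤ → ℝ≥0∞ := fun k => if k ∈ G then (w k / v k) ^ (Q / P) / v k else 0
  have hnorm_w : lqNorm r S (fun k => a k * w k) = T ^ (1 / R) := by
    rw [lqNorm_eq_sum_of_support_subset hr0 hr hGS fun k hk => by simp [a, hk]]
    refine congrArg (· ^ (1 / R)) (Finset.sum_congr rfl fun k hk => ?_)
    rw [show a k = _ from if_pos hk, ENNReal.rpow_div_mul_eq_rpow_add_one _ _ (by positivity),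
      ← ENNReal.rpow_mul]
    congr 1
    field_simp at hexp ⊢
    linarith
  have hnorm_v : lqNorm p S (fun k => a k * v k) = T ^ (1 / P) := by
    rw [lqNorm_eq_sum_of_support_subset hp0 hp hGS fun k hk => by simp [a, hk]]
    refine congrArg (· ^ (1 / P)) (Finset.sum_congr rfl fun k hk => ?_)
    have hv : v k = 0 → w k = 0 := fun hv => by simpa [hv] using hwv k (hGS hk)
    rw [show a k = _ from if_pos hk, ENNReal.rpow_div_div_mul_cancel hv (by positivity),
      ← ENNReal.rpow_mul, div_mul_cancel₀ _ hP.ne']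
  exact ENNReal.le_rpow_of_rpow_le_mul_rpow hP hQ hexp hT (hnorm_w ▸ hnorm_v ▸ hemb a)

theorem stmt3_general (S : Set ℤ) (v w : ℤ → ℝ≥0∞)
    (p r ρ : ℝ≥0∞) (hp0 : 0 < p) (hp : p < ∞) (hr0 : 0 < r) (hr : r < ∞)
    (hρ : 1 / ρ = 1 / r - 1 / p) (C : ℝ≥0∞)
    (hemb : ∀ a : ℤ → ℝ≥0∞,
      lqNorm r S (fun k => a k * w k) ≤ C * lqNorm p S (fun k => a k * v k)) :
    lqNorm ρ S (fun k => w k / v k) ≤ C := by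
  by_cases hρ_top : ρ = ∞
  · rw [lqNorm, if_pos hρ_top]
    exact iSup₂_le fun k hk =>
      ENNReal.div_le_of_le_mul (le_mul_of_lqNorm_le_mul hp0.ne' hp.ne hr0.ne' hr.ne hemb hk)
  have hinv := ENNReal.inv_eq_inv_add_inv_of_one_div_eq_sub hρ hρ_top
  have hρ0 : ρ ≠ 0 := fun h0 => hr0.ne' (ENNReal.inv_eq_top.mp (by simp [hinv, h0]))
  have hQ : 0 < ρ.toReal := ENNReal.toReal_pos hρ0 hρ_top
  have hsum := tsum_div_rpow_le_of_lqNorm_le_mul hp0.ne' hp.ne hr0.ne' hr.ne hQ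
    (ENNReal.one_div_toReal_eq_add_of_inv_eq_add hinv hp0.ne' hρ0) hemb
  rw [lqNorm, if_neg hρ_top]
  calc _ ≤ (C ^ ρ.toReal) ^ (1 / ρ.toReal) := ENNReal.rpow_le_rpow hsum (by positivity)
    _ = C := by rw [← ENNReal.rpow_mul, mul_one_div_cancel hQ.ne', ENNReal.rpow_one]

/-- Landau-type resonance theorem: if the weighted discrete embedding
`ℓ^p({v_k}) ↪ ℓ^r({w_k})` holds with norm `C` (`0 < p, r < ∞`), then
`‖{w_k / v_k}‖_{ℓ^ρ} ≤ C` where `1/ρ = (1/r − 1/p)_+` (in `ℝ≥0∞`, so `ρ = ∞`,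
i.e. a supremum, when `r ≥ p`). -/
theorem stmt3 (S : Set ℤ) (hS : S.Nonempty) (v w : ℤ → ℝ≥0∞)
    (p r ρ : ℝ≥0∞) (hp0 : 0 < p) (hp : p < ∞) (hr0 : 0 < r) (hr : r < ∞)
    (hρ : 1 / ρ = 1 / r - 1 / p) (C : ℝ≥0∞)
    (hemb : ∀ a : ℤ → ℝ≥0∞,
      lqNorm r S (fun k => a k * w k) ≤ C * lqNorm p S (fun k => a k * v k)) :
    lqNorm ρ S (fun k => w k / v k) ≤ C :=
  stmt3_general S v w p r ρ hp0 hp hr0 hr hρ C hemb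
end
end

section
/- Let 1 ≤ p < ∞, 0 < q < p, and let v, w be weights on (0,∞). For every x > 0, (∫_x^∞ w)^{1/q} σ_p(0,x) ≲ (∫_x^∞ (∫_y^∞ w)^{q/(p−q)} w(y) [σ_p(0,y)]^{pq/(p−q)} dy)^{(p−q)/(pq)}, with constant depending only on p and q. Consequently, sup_{t ≥ x} (∫_t^∞ w)^{1/q} σ_p(0,t) ≲ (∫_x^∞ (∫_y^∞ w)^{q/(p−q)} w(y)[σ_p(0,y)]^{pq/(p−q)} dy)^{(p−q)/(pq)} for every x > 0. -/
open MeasureTheory Set ENNReal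

noncomputable section

/-- A weight on `(0,∞)`: a nonnegative measurable function (valued in `ℝ≥0∞`) whose
partial integrals `∫_0^x v` are positive and finite for every `x > 0`. -/
def IsWeight (v : ℝ → ℝ≥0∞) : Prop :=
  Measurable v ∧ ∀ x : ℝ, 0 < x →
    0 < (∫⁻ t in Set.Ioo 0 x, v t) ∧ (∫⁻ t in Set.Ioo 0 x, v t) < ∞

/-- `σ_p(x,y)` built from the weight `v`: for `p = 1` it is `ess sup_{x<t<y} v(t)⁻¹`, and for
`p > 1` it is `(∫_x^y v^{1-p'})^{1/p'}` where `p' = p/(p-1)` (so `1/p' = (p-1)/p`). -/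
def sig (p : ℝ) (v : ℝ → ℝ≥0∞) (x y : ℝ) : ℝ≥0∞ :=
  if p = 1 then essSup (fun t => (v t)⁻¹) (volume.restrict (Set.Ioo x y))
  else (∫⁻ t in Set.Ioo x y, v t ^ (1 - p / (p - 1))) ^ ((p - 1) / p)

/-!
Write `F y = ∫_y^∞ w`. As `F` is right-continuous, `b = inf {y ≥ x | F y ≤ F x / 2}` satisfies
`F b ≤ F x / 2`, so (since `w dy` has no atoms) the interval `(x, b)` carries `w`-mass at least
`F x / 2`, while `F ≥ F x / 2` on it. Hence `(F x / 2) ^ (r + 1) ≤ ∫_x^∞ F^r w` for `r > 0`; when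
`F x = ∞`, local integrability of `w` forces `F = ∞` on `(x, ∞)`. Multiplying by
`σ_p(0,x) ^ s ≤ σ_p(0,y) ^ s` for `y ≥ x`, with `r = q/(p-q)` and `s = pq/(p-q)`, and taking the
power `(p-q)/(pq)` gives the pointwise bound with constant `2 ^ (1/q)`; the bound for the supremum
follows because the right-hand side decreases in `x`.
-/

theorem sig_mono {p : ℝ} (hp : 1 ≤ p) (v : ℝ → ℝ≥0∞) (a : ℝ) : Monotone (sig p v a) := by
  intro x y hxy
  have hIoo : Ioo a x ⊆ Ioo a y := Ioo_subset_Ioo_right hxy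
  unfold sig
  split_ifs
  · exact essSup_mono_measure
      (Measure.absolutelyContinuous_of_le (Measure.restrict_mono hIoo le_rfl))
  · exact ENNReal.rpow_le_rpow (lintegral_mono_set hIoo) (div_nonneg (by linarith) (by linarith))

theorem exists_measure_Ioi_lt (μ : Measure ℝ) {x : ℝ} (hx : μ (Ioi x) ≠ ∞) {ε : ℝ≥0∞}
    (hε : ε ≠ 0) : ∃ y, x ≤ y ∧ μ (Ioi y) < ε := by
  have h : ⨅ y : ℝ, μ (Ioi y) = 0 := by
    rw [← antitone_Ioi.measure_iInter (fun _ => measurableSet_Ioi.nullMeasurableSet) ⟨x, hx⟩]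
    convert measure_empty (μ := μ)
    exact iInter_eq_empty_iff.mpr fun t => ⟨t, lt_irrefl t⟩
  obtain ⟨y, hy⟩ := iInf_lt_iff.mp (h ▸ pos_iff_ne_zero.mpr hε)
  exact ⟨max x y, le_max_left x y, (measure_mono (Ioi_subset_Ioi (le_max_right x y))).trans_lt hy⟩

theorem measure_Ioi_le_of_forall_gt {μ : Measure ℝ} {c : ℝ≥0∞} {a : ℝ}
    (h : ∀ y, a < y → μ (Ioi y) ≤ c) : μ (Ioi a) ≤ c := by
  obtain ⟨u, hu_anti, hu_gt, hu_lim⟩ := exists_seq_strictAnti_tendsto a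
  have hmono : Monotone fun n => Ici (u n) := fun m n hmn =>
    Ici_subset_Ici.mpr (hu_anti.antitone hmn)
  rw [← iUnion_Ici_eq_Ioi_of_lt_of_tendsto hu_gt hu_lim, hmono.measure_iUnion]
  exact iSup_le fun n => (measure_mono (Ici_subset_Ioi.mpr (hu_anti n.lt_succ_self))).trans
    (h _ (hu_gt _))

theorem exists_half_le_measure_Ioo (μ : Measure ℝ) [NullSingletonClass μ] {x : ℝ}
    (h0 : μ (Ioi x) ≠ 0) (hfin : μ (Ioi x) ≠ ∞) :
    ∃ b, μ (Ioi x) / 2 ≤ μ (Ioo x b) ∧ ∀ y ∈ Ioo x b, μ (Ioi x) / 2 ≤ μ (Ioi y) := by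
  set c := μ (Ioi x)
  set L := {y | x ≤ y ∧ μ (Ioi y) ≤ c / 2}
  have hL : L.Nonempty := by
    obtain ⟨y, hxy, hy⟩ := exists_measure_Ioi_lt μ hfin (ε := c / 2) (by simp [h0])
    exact ⟨y, hxy, hy.le⟩
  have hL_bdd : BddBelow L := ⟨x, fun y hy => hy.1⟩
  refine ⟨sInf L, ?_, fun y hy => ?_⟩
  · have htail : μ (Ici (sInf L)) ≤ c / 2 := by
      rw [← measure_congr Ioi_ae_eq_Ici]
      refine measure_Ioi_le_of_forall_gt fun y hy => ?_
      obtain ⟨z, hzL, hzy⟩ := exists_lt_of_csInf_lt hL hy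
      exact (measure_mono (Ioi_subset_Ioi hzy.le)).trans hzL.2
    have : c / 2 + c / 2 ≤ μ (Ioo x (sInf L)) + c / 2 := by
      rw [ENNReal.add_halves]
      exact (measure_mono Ioi_subset_Ioo_union_Ici).trans
        ((measure_union_le _ _).trans (add_le_add le_rfl htail))
    exact ENNReal.le_of_add_le_add_right (ENNReal.div_ne_top hfin two_ne_zero) this
  · have := notMem_of_lt_csInf hy.2 hL_bdd
    simp only [L, mem_ofPred_eq, not_and, not_le] at this
    exact (this hy.1.le).le

theorem measure_Ioi_div_two_rpow_le (μ : Measure ℝ) [NullSingletonClass μ] {r : ℝ} (hr : 0 ≤ r)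
    {x : ℝ} (hfin : μ (Ioi x) ≠ ∞) :
    (μ (Ioi x) / 2) ^ (r + 1) ≤ ∫⁻ y in Ioi x, μ (Ioi y) ^ r ∂μ := by
  rcases eq_or_ne (μ (Ioi x)) 0 with h0 | h0
  · simp [h0, ENNReal.zero_rpow_of_pos (by linarith : 0 < r + 1)]
  obtain ⟨b, hb, hF⟩ := exists_half_le_measure_Ioo μ h0 hfin
  calc (μ (Ioi x) / 2) ^ (r + 1) = (μ (Ioi x) / 2) ^ r * (μ (Ioi x) / 2) := by
        rw [ENNReal.rpow_add _ _ (by simp [h0]) (ENNReal.div_ne_top hfin two_ne_zero),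
          ENNReal.rpow_one]
    _ ≤ (μ (Ioi x) / 2) ^ r * μ (Ioo x b) := by gcongr
    _ = ∫⁻ _ in Ioo x b, (μ (Ioi x) / 2) ^ r ∂μ := by rw [setLIntegral_const]
    _ ≤ ∫⁻ y in Ioo x b, μ (Ioi y) ^ r ∂μ :=
        setLIntegral_mono' measurableSet_Ioo fun y hy => ENNReal.rpow_le_rpow (hF y hy) hr
    _ ≤ ∫⁻ y in Ioi x, μ (Ioi y) ^ r ∂μ := lintegral_mono_set Ioo_subset_Ioi_self

theorem IsWeight.setLIntegral_Ioi_eq_top {w : ℝ → ℝ≥0∞} (hw : IsWeight w) {x y : ℝ} (hx : 0 < x)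
    (hxy : x < y) (h : ∫⁻ t in Ioi x, w t = ∞) : ∫⁻ t in Ioi y, w t = ∞ := by
  have hIoc : Ioc x y ⊆ Ioo 0 (y + 1) := fun t ht => ⟨hx.trans ht.1, ht.2.trans_lt (lt_add_one y)⟩
  have hloc : ∫⁻ t in Ioc x y, w t ≠ ∞ :=
    ((lintegral_mono_set hIoc).trans_lt (hw.2 (y + 1) (by linarith)).2).ne
  rw [← Ioc_union_Ioi_eq_Ioi hxy.le, lintegral_union measurableSet_Ioi Ioc_disjoint_Ioi_same] at h
  exact (ENNReal.add_eq_top.mp h).resolve_left hloc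

theorem IsWeight.lintegral_Ioi_div_two_rpow_le {w : ℝ → ℝ≥0∞} (hw : IsWeight w) {r : ℝ}
    (hr : 0 < r) {x : ℝ} (hx : 0 < x) :
    ((∫⁻ t in Ioi x, w t) / 2) ^ (r + 1) ≤ ∫⁻ y in Ioi x, (∫⁻ t in Ioi y, w t) ^ r * w y := by
  rcases eq_or_ne (∫⁻ t in Ioi x, w t) ∞ with htop | hfin
  · suffices ∫⁻ y in Ioi x, (∫⁻ t in Ioi y, w t) ^ r * w y = ∞ from this ▸ le_top
    rw [setLIntegral_congr_fun measurableSet_Ioi fun y hy => by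
        rw [hw.setLIntegral_Ioi_eq_top hx hy htop, ENNReal.top_rpow_of_pos hr],
      lintegral_const_mul _ hw.1, htop, top_mul_top]
  · have hμ : ∀ y, volume.withDensity w (Ioi y) = ∫⁻ t in Ioi y, w t :=
      fun y => withDensity_apply w measurableSet_Ioi
    have hmeas : Measurable fun y => (∫⁻ t in Ioi y, w t) ^ r :=
      (Antitone.measurable fun a b hab => lintegral_mono_set (Ioi_subset_Ioi hab)).pow_const r
    have key := measure_Ioi_div_two_rpow_le (volume.withDensity w) hr.le (x := x) (by rwa [hμ])
    simp only [hμ] at key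
    rw [setLIntegral_withDensity_eq_setLIntegral_mul _ hw.1 hmeas measurableSet_Ioi] at key
    simpa only [Pi.mul_apply, mul_comm] using key

theorem lintegral_Ioi_rpow_mul_sig_le {p q : ℝ} (hp : 1 ≤ p) (hq : 0 < q) (hqp : q < p)
    (v : ℝ → ℝ≥0∞) {w : ℝ → ℝ≥0∞} (hw : IsWeight w) {x : ℝ} (hx : 0 < x) :
    (∫⁻ t in Ioi x, w t) ^ (1 / q) * sig p v 0 x ≤
      2 ^ (1 / q) * (∫⁻ y in Ioi x, (∫⁻ t in Ioi y, w t) ^ (q / (p - q)) * w y *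
        sig p v 0 y ^ (p * q / (p - q))) ^ ((p - q) / (p * q)) := by
  have hpq : 0 < p - q := sub_pos.mpr hqp
  have hp0 : 0 < p := hq.trans hqp
  have hse : p * q / (p - q) * ((p - q) / (p * q)) = 1 := by field_simp
  have hre : (q / (p - q) + 1) * ((p - q) / (p * q)) = 1 / q := by field_simp; ring
  set c := ∫⁻ t in Ioi x, w t
  set r := q / (p - q)
  set s := p * q / (p - q)
  set e := (p - q) / (p * q)
  have he : 0 ≤ e := by positivity
  have hkey : sig p v 0 x ^ s * (c / 2) ^ (r + 1) ≤
      ∫⁻ y in Ioi x, (∫⁻ t in Ioi y, w t) ^ r * w y * sig p v 0 y ^ s := calc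
    _ ≤ sig p v 0 x ^ s * ∫⁻ y in Ioi x, (∫⁻ t in Ioi y, w t) ^ r * w y := by
        gcongr; exact hw.lintegral_Ioi_div_two_rpow_le (by positivity) hx
    _ ≤ ∫⁻ y in Ioi x, sig p v 0 x ^ s * ((∫⁻ t in Ioi y, w t) ^ r * w y) :=
        lintegral_const_mul_le _ _
    _ ≤ _ := setLIntegral_mono' measurableSet_Ioi fun y hy => by
        rw [mul_comm]; gcongr; exact sig_mono hp v 0 hy.out.le
  have h2 : (2 : ℝ≥0∞) ^ (1 / q) ≠ 0 := by positivity
  calc c ^ (1 / q) * sig p v 0 x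
      = 2 ^ (1 / q) * (sig p v 0 x ^ s * (c / 2) ^ (r + 1)) ^ e := by
        rw [mul_rpow_of_nonneg _ _ he, ← rpow_mul, ← rpow_mul, hse, hre, rpow_one,
          div_rpow_of_nonneg _ _ (by positivity), mul_div_assoc', mul_comm,
          ENNReal.mul_div_cancel h2 (by simp)]
    _ ≤ _ := by gcongr

/-- For `1 ≤ p`, `0 < q < p` and weights `v, w`, the pointwise bound
`(∫_x^∞ w)^{1/q} σ_p(0,x) ≲ (∫_x^∞ (∫_y^∞ w)^{q/(p−q)} w(y) [σ_p(0,y)]^{pq/(p−q)} dy)^{(p−q)/(pq)}`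
holds for every `x > 0`, and consequently the same bound holds for
`sup_{t ≥ x} (∫_t^∞ w)^{1/q} σ_p(0,t)`, with constant depending only on `p` and `q`. -/
theorem stmt16 (p q : ℝ) (hp : 1 ≤ p) (hq : 0 < q) (hqp : q < p) :
    ∃ C : ℝ≥0∞, C < ∞ ∧
      ∀ v w : ℝ → ℝ≥0∞, IsWeight v → IsWeight w → ∀ x : ℝ, 0 < x →
        (∫⁻ t in Ioi x, w t) ^ (1 / q) * sig p v 0 x ≤
            C * (∫⁻ y in Ioi x, (∫⁻ t in Ioi y, w t) ^ (q / (p - q)) * w y *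
                  sig p v 0 y ^ (p * q / (p - q))) ^ ((p - q) / (p * q)) ∧
          (⨆ t ∈ Ici x, (∫⁻ s in Ioi t, w s) ^ (1 / q) * sig p v 0 t) ≤
            C * (∫⁻ y in Ioi x, (∫⁻ t in Ioi y, w t) ^ (q / (p - q)) * w y *
                  sig p v 0 y ^ (p * q / (p - q))) ^ ((p - q) / (p * q)) := by
  refine ⟨2 ^ (1 / q), ENNReal.rpow_lt_top_of_nonneg (by positivity) (by norm_num),
    fun v w _ hw x hx => ⟨lintegral_Ioi_rpow_mul_sig_le hp hq hqp v hw hx, ?_⟩⟩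
  refine iSup₂_le fun t (ht : x ≤ t) =>
    (lintegral_Ioi_rpow_mul_sig_le hp hq hqp v hw (hx.trans_le ht)).trans ?_
  gcongr
end
end

section
/- Let 0 < q < p < ∞, 1 ≤ p, v, w weights on (0,∞), and 0 ≤ a < b ≤ ∞ with a an interior point x_k and b = x_{k+1}. Then (∫_a^b (∫_x^∞ w)^{q/(p−q)} w(x)[σ_p(0,x)]^{pq/(p−q)} dx)^{(p−q)/(pq)} ≲ (∫_a^b (∫_x^b w)^{q/(p−q)} w(x) [σ_p(a,x)]^{pq/(p−q)} dx)^{(p−q)/(pq)} + sup_{t ∈ [a,∞)} (∫_t^∞ w)^{1/q} σ_p(0,t), with constant depending only on p and q. -/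
/-!
Write `r = q/(p-q)`, `ρ = pq/(p-q)`, `F(x) = ∫_x^∞ w`, `S` for the supremum and `R` for the
integral on the right; it suffices to bound the integral on the left by `C (R + S^ρ)`. Since
`σ_p(0,x) ≤ σ_p(0,a) + σ_p(a,x)`, the `σ_p(0,a)` part contributes at most
`F(a)^{r+1} σ_p(0,a)^ρ = (F(a)^{1/q} σ_p(0,a))^ρ ≤ S^ρ`. In the `σ_p(a,x)` part split
`F(x) ≤ ∫_x^b w + T` with `T = ∫_{t ≥ b} w` (zero when `b = ∞`). The first piece gives
`R`. For the second, `σ_p(a,x) ≤ σ_p(0,x) ≤ S F(x)^{-1/q}` reduces everything to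
`∫_{F ≥ T} F^{-(r+1)} w ≲ T^{-r}`, which follows from a dyadic decomposition of the range
of `F`: the set `{F < θ}` is an upper set, so it carries `w`-mass at most `θ`.
-/

open MeasureTheory Set ENNReal

noncomputable section

lemma le_mul_rpow_neg_of_rpow_mul_le {y σ S : ℝ≥0∞} {t : ℝ} (ht : 0 < t) (hy : y ≠ 0)
    (hS : S ≠ ⊤) (h : y ^ t * σ ≤ S) : σ ≤ S * y ^ (-t) := by
  rw [rpow_neg, ← div_eq_mul_inv]
  refine (ENNReal.le_div_iff_mul_le (Or.inl ?_) (Or.inr hS)).2 (by rwa [mul_comm])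
  simp [rpow_eq_zero_iff, hy, ht, ht.not_gt]

lemma rpow_mul_rpow_neg_le_one (x : ℝ≥0∞) (r : ℝ) : x ^ r * x ^ (-r) ≤ 1 := by
  rw [rpow_neg]
  exact ENNReal.mul_inv_le_one _

lemma rpow_le_mul_add_of_le_mul_add_rpow {I R S M : ℝ≥0∞} {ρ e : ℝ} (he : 0 < e)
    (hρe : ρ * e = 1) (h : I ≤ M * (R + S ^ ρ)) : I ^ e ≤ M ^ e * 2 ^ e * (R ^ e + S) :=
  calc I ^ e ≤ (M * (R + S ^ ρ)) ^ e := rpow_le_rpow h he.le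
    _ = M ^ e * (R + S ^ ρ) ^ e := mul_rpow_of_nonneg _ _ he.le
    _ ≤ M ^ e * (2 ^ e * (R ^ e + (S ^ ρ) ^ e)) := by
        gcongr
        exact add_rpow_le_two_rpow_mul_rpow_add_rpow _ _ he.le
    _ = M ^ e * 2 ^ e * (R ^ e + S) := by rw [← rpow_mul, hρe, rpow_one, mul_assoc]

lemma rpow_neg_le_tsum_indicator {B y : ℝ≥0∞} (hB : B ≠ 0) (hBy : B ≤ y) {s : ℝ}
    (hs : 0 < s) :
    y ^ (-s) ≤
      ∑' k : ℕ, (Iio (2 ^ (k + 1) * B)).indicator (fun _ => (2 ^ k * B) ^ (-s)) y := by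
  rcases eq_or_ne y ⊤ with rfl | hy
  · simp [ENNReal.top_rpow_of_neg (neg_neg_of_pos hs)]
  have hex : ∃ k : ℕ, y < 2 ^ (k + 1) * B := by
    obtain ⟨n, hn⟩ := ENNReal.exists_nat_mul_gt hB hy
    refine ⟨n, hn.trans_le (mul_le_mul_left ?_ B)⟩
    exact_mod_cast (Nat.lt_two_pow_self (n := n)).le.trans
      (Nat.pow_le_pow_right two_pos n.le_succ)
  classical
  set k := Nat.find hex
  have hk_lower : 2 ^ k * B ≤ y := by
    rcases Nat.eq_zero_or_eq_succ_pred k with h0 | hsucc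
    · rw [h0, pow_zero, one_mul]; exact hBy
    · rw [hsucc]; exact not_lt.1 (Nat.find_min hex (Nat.pred_lt (by omega)))
  calc y ^ (-s) ≤ (2 ^ k * B) ^ (-s) := by
        rw [ENNReal.rpow_neg, ENNReal.rpow_neg]
        exact ENNReal.inv_le_inv.2 (ENNReal.rpow_le_rpow hk_lower hs.le)
    _ = (Iio (2 ^ (k + 1) * B)).indicator (fun _ => (2 ^ k * B) ^ (-s)) y :=
        (indicator_of_mem (mem_Iio.2 (Nat.find_spec hex)) fun _ => (2 ^ k * B) ^ (-s)).symm
    _ ≤ _ := ENNReal.le_tsum k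

lemma two_pow_mul_rpow_neg_mul_two_pow_succ_mul (k : ℕ) {B : ℝ≥0∞} (hB0 : B ≠ 0)
    (hB : B ≠ ⊤) (r : ℝ) :
    (2 ^ k * B) ^ (-(r + 1)) * (2 ^ (k + 1) * B) = 2 * B ^ (-r) * (2 ^ (-r)) ^ k := by
  have hx0 : 2 ^ k * B ≠ 0 := mul_ne_zero (by simp) hB0
  have hxt : 2 ^ k * B ≠ ⊤ := mul_ne_top (by simp) hB
  calc (2 ^ k * B) ^ (-(r + 1)) * (2 ^ (k + 1) * B)
      = 2 * ((2 ^ k * B) ^ (-(r + 1)) * (2 ^ k * B) ^ (1 : ℝ)) := by rw [rpow_one]; ring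
    _ = 2 * (2 ^ k * B) ^ (-r) := by rw [← rpow_add _ _ hx0 hxt]; ring_nf
    _ = 2 * B ^ (-r) * (2 ^ (-r)) ^ k := by
        rw [mul_rpow_of_ne_top (by simp) hB, ← rpow_natCast_mul, mul_comm (k : ℝ),
          rpow_mul_natCast]
        ring

/-- `∑ₖ 2 (2^{-r})^k`: the layer `2^k B ≤ F < 2^(k+1) B` contributes `2 (2^{-r})^k B^{-r}`. -/
def dyadicConst (r : ℝ) : ℝ≥0∞ := 2 * (1 - 2 ^ (-r))⁻¹

def comparisonConst (r ρ : ℝ) : ℝ≥0∞ := 2 ^ ρ * (1 + 2 ^ r * (1 + dyadicConst r))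

lemma dyadicConst_ne_zero (r : ℝ) : dyadicConst r ≠ 0 :=
  mul_ne_zero two_ne_zero (ENNReal.inv_ne_zero.2 (sub_ne_top one_ne_top))

lemma dyadicConst_ne_top {r : ℝ} (hr : 0 < r) : dyadicConst r ≠ ⊤ :=
  mul_ne_top ofNat_ne_top (inv_ne_top.2 (tsub_pos_of_lt
    (rpow_lt_one_of_one_lt_of_neg one_lt_two (neg_neg_of_pos hr))).ne')

lemma comparisonConst_ne_top {r ρ : ℝ} (hr : 0 < r) (hρ : 0 ≤ ρ) :
    comparisonConst r ρ ≠ ⊤ :=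
  mul_ne_top (rpow_ne_top_of_nonneg hρ ofNat_ne_top) (add_ne_top.2 ⟨one_ne_top,
    mul_ne_top (rpow_ne_top_of_nonneg hr.le ofNat_ne_top)
      (add_ne_top.2 ⟨one_ne_top, dyadicConst_ne_top hr⟩)⟩)

lemma sig_le_sig {p : ℝ} (hp : 1 ≤ p) (v : ℝ → ℝ≥0∞) {x x' y y' : ℝ}
    (hx : x ≤ x') (hy : y' ≤ y) : sig p v x' y' ≤ sig p v x y := by
  have hsub : Ioo x' y' ⊆ Ioo x y := Ioo_subset_Ioo hx hy
  unfold sig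
  split_ifs
  · exact essSup_mono_measure' (Measure.restrict_mono hsub le_rfl)
  · exact rpow_le_rpow (lintegral_mono_set hsub) (div_nonneg (by linarith) (by linarith))

lemma measurable_sig {p : ℝ} (hp : 1 ≤ p) (v : ℝ → ℝ≥0∞) (x : ℝ) :
    Measurable (sig p v x) :=
  Monotone.measurable fun _ _ h => sig_le_sig hp v le_rfl h

lemma restrict_Ioo_le_add (μ : Measure ℝ) [NullSingletonClass μ] (x y z : ℝ) :
    μ.restrict (Ioo x z) ≤ μ.restrict (Ioo x y) + μ.restrict (Ioo y z) :=
  calc μ.restrict (Ioo x z) ≤ μ.restrict (Ioo x y ∪ Ico y z) :=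
        Measure.restrict_mono Ioo_subset_Ioo_union_Ico le_rfl
    _ ≤ μ.restrict (Ioo x y) + μ.restrict (Ico y z) := Measure.restrict_union_le _ _
    _ = μ.restrict (Ioo x y) + μ.restrict (Ioo y z) := by
        rw [Measure.restrict_congr_set (Ioo_ae_eq_Ico (a := y) (b := z))]

lemma essSup_add_measure_le {α : Type*} [MeasurableSpace α] (f : α → ℝ≥0∞)
    (μ ν : Measure α) :
    essSup f (μ + ν) ≤ essSup f μ + essSup f ν := by
  refine essSup_le_of_ae_le _ (ae_add_measure_iff.2 ⟨?_, ?_⟩)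
  · filter_upwards [ENNReal.ae_le_essSup f] with t ht using ht.trans le_self_add
  · filter_upwards [ENNReal.ae_le_essSup f] with t ht using ht.trans le_add_self

lemma sig_le_add {p : ℝ} (hp : 1 ≤ p) (v : ℝ → ℝ≥0∞) (x y z : ℝ) :
    sig p v x z ≤ sig p v x y + sig p v y z := by
  unfold sig
  split_ifs with hp1
  · exact (essSup_mono_measure' (restrict_Ioo_le_add volume x y z)).trans
      (essSup_add_measure_le _ _ _)
  · have hexp : 0 ≤ (p - 1) / p := div_nonneg (by linarith) (by linarith)
    calc (∫⁻ t in Ioo x z, v t ^ (1 - p / (p - 1))) ^ ((p - 1) / p)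
        ≤ ((∫⁻ t in Ioo x y, v t ^ (1 - p / (p - 1))) +
            ∫⁻ t in Ioo y z, v t ^ (1 - p / (p - 1))) ^ ((p - 1) / p) := by
          rw [← lintegral_add_measure]
          exact rpow_le_rpow (lintegral_mono' (restrict_Ioo_le_add volume x y z) le_rfl) hexp
      _ ≤ _ := rpow_add_le_add_rpow _ _ hexp (div_le_one_of_le₀ (by linarith) (by linarith))

lemma measurable_measure_Ioi (μ : Measure ℝ) : Measurable fun x => μ (Ioi x) :=
  Antitone.measurable fun _ _ hxy => measure_mono (Ioi_subset_Ioi hxy)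

lemma measurable_measure_setOf_lt_and (μ : Measure ℝ) (P : ℝ → Prop) :
    Measurable fun x => μ {t | x < t ∧ P t} :=
  Antitone.measurable fun _ _ hxy => measure_mono fun _ ht => ⟨hxy.trans_lt ht.1, ht.2⟩

lemma measure_le_of_isUpperSet {μ : Measure ℝ} [NullSingletonClass μ] {U : Set ℝ}
    (hU : IsUpperSet U) {θ : ℝ≥0∞} (hθ : ∀ x ∈ U, μ (Ioi x) ≤ θ) : μ U ≤ θ := by
  -- `U` is the union of the `Ioi q` over rationals `q ∈ U`, up to at most its least element.
  set Q : Set ℚ := {q | (q : ℝ) ∈ U}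
  set V : Set ℝ := ⋃ q ∈ Q, Ioi (q : ℝ)
  have hle : ∀ x ∈ U, ∀ y ∈ U \ V, y ≤ x := fun x hx y hy => by
    by_contra! hxy
    obtain ⟨q, hxq, hqy⟩ := exists_rat_btwn hxy
    exact hy.2 (mem_biUnion (x := q) (hU hxq.le hx) hqy)
  have hV : μ V ≤ θ := by
    rw [measure_biUnion_eq_iSup Q.to_countable]
    · exact iSup₂_le fun q hq => hθ q hq
    · intro q₁ hq₁ q₂ hq₂
      refine ⟨min q₁ q₂, ?_, Ioi_subset_Ioi ?_, Ioi_subset_Ioi ?_⟩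
      · rcases min_choice q₁ q₂ with h | h <;> rw [h] <;> assumption
      · exact_mod_cast min_le_left q₁ q₂
      · exact_mod_cast min_le_right q₁ q₂
  calc μ U ≤ μ (U ∩ V) + μ (U \ V) := measure_le_inter_add_sdiff μ U V
    _ = μ (U ∩ V) := by
        rw [Set.Subsingleton.measure_zero (fun x hx y hy => le_antisymm (hle y hy.1 x hx)
          (hle x hx.1 y hy)) μ, add_zero]
    _ ≤ θ := (measure_mono inter_subset_right).trans hV

lemma lintegral_measure_Ioi_rpow_le {μ : Measure ℝ} {a r : ℝ} (hr : 0 ≤ r) {T : Set ℝ}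
    (hT : T ⊆ Ioi a) : ∫⁻ x in T, μ (Ioi x) ^ r ∂μ ≤ μ (Ioi a) ^ (r + 1) :=
  calc ∫⁻ x in T, μ (Ioi x) ^ r ∂μ ≤ ∫⁻ _ in T, μ (Ioi a) ^ r ∂μ :=
        setLIntegral_mono measurable_const fun x hx =>
          rpow_le_rpow (measure_mono (Ioi_subset_Ioi (hT hx).le)) hr
    _ = μ (Ioi a) ^ r * μ T := setLIntegral_const _ _
    _ ≤ μ (Ioi a) ^ r * μ (Ioi a) := by gcongr
    _ = μ (Ioi a) ^ (r + 1) := by rw [rpow_add_of_nonneg _ _ hr zero_le_one, rpow_one]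

lemma lintegral_measure_Ioi_rpow_neg_le {μ : Measure ℝ} [NullSingletonClass μ] {r : ℝ}
    (hr : 0 < r) (B : ℝ≥0∞) :
    ∫⁻ x in {x | B ≤ μ (Ioi x)}, μ (Ioi x) ^ (-(r + 1)) ∂μ ≤
      dyadicConst r * B ^ (-r) := by
  rcases eq_or_ne B 0 with rfl | hB0
  · rw [zero_rpow_of_neg (neg_neg_of_pos hr), mul_top (dyadicConst_ne_zero r)]
    exact le_top
  set F : ℝ → ℝ≥0∞ := fun x => μ (Ioi x)
  have hF : Antitone F := fun x y hxy => measure_mono (Ioi_subset_Ioi hxy)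
  rcases eq_or_ne B ⊤ with rfl | hB
  · calc ∫⁻ x in {x | ⊤ ≤ F x}, F x ^ (-(r + 1)) ∂μ
        = ∫⁻ x in {x | ⊤ ≤ F x}, 0 ∂μ :=
          setLIntegral_congr_fun (measurableSet_le measurable_const hF.measurable) fun x hx => by
            rw [show F x = ⊤ from top_le_iff.1 hx, top_rpow_of_neg (by linarith)]
      _ ≤ _ := by simp
  have hU : ∀ θ, μ (F ⁻¹' Iio θ) ≤ θ := fun θ =>
    measure_le_of_isUpperSet (fun x y hxy hx => (hF hxy).trans_lt hx) fun x hx => le_of_lt hx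
  calc ∫⁻ x in {x | B ≤ F x}, F x ^ (-(r + 1)) ∂μ
      ≤ ∫⁻ x in {x | B ≤ F x}, ∑' k : ℕ,
          (F ⁻¹' Iio (2 ^ (k + 1) * B)).indicator (fun _ => (2 ^ k * B) ^ (-(r + 1))) x ∂μ :=
        setLIntegral_mono' (measurableSet_le measurable_const hF.measurable) fun x hx =>
          rpow_neg_le_tsum_indicator hB0 hx (by linarith)
    _ ≤ ∑' k : ℕ, (2 ^ k * B) ^ (-(r + 1)) * μ (F ⁻¹' Iio (2 ^ (k + 1) * B)) := by
        refine setLIntegral_le_lintegral _ _ |>.trans_eq ?_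
        rw [lintegral_tsum fun k => (measurable_const.indicator
          (hF.measurable measurableSet_Iio)).aemeasurable]
        simp_rw [lintegral_indicator_const (hF.measurable measurableSet_Iio)]
    _ ≤ ∑' k : ℕ, 2 * B ^ (-r) * (2 ^ (-r)) ^ k := by
        refine ENNReal.tsum_le_tsum fun k => ?_
        rw [← two_pow_mul_rpow_neg_mul_two_pow_succ_mul k hB0 hB]
        gcongr
        exact hU _
    _ = dyadicConst r * B ^ (-r) := by
        rw [ENNReal.tsum_mul_left, ENNReal.tsum_geometric, dyadicConst]; ring

section Comparison

variable {μ : Measure ℝ} {p q r ρ : ℝ} {v : ℝ → ℝ≥0∞} {a : ℝ} {b : EReal}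

lemma lintegral_measure_Ioi_rpow_mul_sig_const_le (hq : 0 < q) (hr : 0 ≤ r)
    (hρ : ρ = q * (r + 1)) :
    ∫⁻ x in {t : ℝ | a < t ∧ (t : EReal) < b}, μ (Ioi x) ^ r * sig p v 0 a ^ ρ ∂μ ≤
      (⨆ t ∈ Ici a, μ (Ioi t) ^ (1 / q) * sig p v 0 t) ^ ρ := by
  have hρ0 : 0 ≤ ρ := hρ ▸ mul_nonneg hq.le (by linarith)
  calc ∫⁻ x in {t : ℝ | a < t ∧ (t : EReal) < b}, μ (Ioi x) ^ r * sig p v 0 a ^ ρ ∂μ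
      = (∫⁻ x in {t : ℝ | a < t ∧ (t : EReal) < b}, μ (Ioi x) ^ r ∂μ) *
          sig p v 0 a ^ ρ :=
        lintegral_mul_const _ ((measurable_measure_Ioi μ).pow_const r)
    _ ≤ μ (Ioi a) ^ (r + 1) * sig p v 0 a ^ ρ := by
        gcongr
        exact lintegral_measure_Ioi_rpow_le hr fun t ht => ht.1
    _ = (μ (Ioi a) ^ (1 / q) * sig p v 0 a) ^ ρ := by
        rw [mul_rpow_of_nonneg _ _ hρ0, ← rpow_mul, hρ, one_div, inv_mul_cancel_left₀ hq.ne']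
    _ ≤ _ := rpow_le_rpow (le_iSup₂ (f := fun t (_ : t ∈ Ici a) => μ (Ioi t) ^ (1 / q) *
        sig p v 0 t) a self_mem_Ici) hρ0

lemma measure_rpow_mul_lintegral_sig_le [NullSingletonClass μ] (hp : 1 ≤ p) (hq : 0 < q)
    (hr : 0 < r) (hρ : ρ = q * (r + 1)) (ha : 0 ≤ a)
    (hS : ⨆ t ∈ Ici a, μ (Ioi t) ^ (1 / q) * sig p v 0 t ≠ ⊤) :
    μ {t : ℝ | b ≤ t} ^ r *
        ∫⁻ x in {t : ℝ | a < t ∧ (t : EReal) < b}, sig p v a x ^ ρ ∂μ ≤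
      dyadicConst r * (⨆ t ∈ Ici a, μ (Ioi t) ^ (1 / q) * sig p v 0 t) ^ ρ := by
  set S := ⨆ t ∈ Ici a, μ (Ioi t) ^ (1 / q) * sig p v 0 t
  set T := μ {t : ℝ | b ≤ t}
  set D := {t : ℝ | a < t ∧ (t : EReal) < b}
  have hρ0 : 0 ≤ ρ := hρ ▸ mul_nonneg hq.le (by linarith)
  rcases eq_or_ne T 0 with hT0 | hT0
  · rw [hT0, zero_rpow_of_pos hr, zero_mul]
    exact zero_le
  have hTF : D ⊆ {x | T ≤ μ (Ioi x)} := fun x hx =>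
    measure_mono fun t ht => EReal.coe_lt_coe_iff.1 (hx.2.trans_le ht)
  have hpt : ∀ x ∈ D, sig p v a x ^ ρ ≤ S ^ ρ * μ (Ioi x) ^ (-(r + 1)) := fun x hx => by
    have hσ := le_mul_rpow_neg_of_rpow_mul_le (one_div_pos.2 hq)
      (ne_bot_of_le_ne_bot hT0 (hTF hx)) hS
      (le_iSup₂ (f := fun t (_ : t ∈ Ici a) => μ (Ioi t) ^ (1 / q) * sig p v 0 t) x hx.1.le)
    calc sig p v a x ^ ρ ≤ (S * μ (Ioi x) ^ (-(1 / q))) ^ ρ :=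
          rpow_le_rpow ((sig_le_sig hp v ha le_rfl).trans hσ) hρ0
      _ = S ^ ρ * μ (Ioi x) ^ (-(r + 1)) := by
          rw [mul_rpow_of_nonneg _ _ hρ0, ← rpow_mul, hρ]
          field_simp
  calc T ^ r * ∫⁻ x in D, sig p v a x ^ ρ ∂μ
      ≤ T ^ r * ∫⁻ x in D, S ^ ρ * μ (Ioi x) ^ (-(r + 1)) ∂μ :=
        mul_le_mul_right
          (setLIntegral_mono (measurable_const.mul ((measurable_measure_Ioi μ).pow_const _)) hpt) _
    _ ≤ T ^ r * (S ^ ρ * ∫⁻ x in {x | T ≤ μ (Ioi x)}, μ (Ioi x) ^ (-(r + 1)) ∂μ) := by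
        rw [lintegral_const_mul _ ((measurable_measure_Ioi μ).pow_const _)]
        gcongr
    _ ≤ T ^ r * (S ^ ρ * (dyadicConst r * T ^ (-r))) := by
        gcongr
        exact lintegral_measure_Ioi_rpow_neg_le hr T
    _ = dyadicConst r * S ^ ρ * (T ^ r * T ^ (-r)) := by ring
    _ ≤ dyadicConst r * S ^ ρ := mul_le_of_le_one_right' (rpow_mul_rpow_neg_le_one T r)

lemma lintegral_measure_Ioi_rpow_mul_sig_le [NullSingletonClass μ] (hp : 1 ≤ p) (hq : 0 < q)
    (hr : 0 < r) (hρ : ρ = q * (r + 1)) (ha : 0 ≤ a)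
    (hS : ⨆ t ∈ Ici a, μ (Ioi t) ^ (1 / q) * sig p v 0 t ≠ ⊤) :
    ∫⁻ x in {t : ℝ | a < t ∧ (t : EReal) < b}, μ (Ioi x) ^ r * sig p v a x ^ ρ ∂μ ≤
      2 ^ r * (∫⁻ x in {t : ℝ | a < t ∧ (t : EReal) < b},
          μ {t : ℝ | x < t ∧ (t : EReal) < b} ^ r * sig p v a x ^ ρ ∂μ +
        dyadicConst r * (⨆ t ∈ Ici a, μ (Ioi t) ^ (1 / q) * sig p v 0 t) ^ ρ) := by
  set T := μ {t : ℝ | b ≤ t}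
  have hsplit : ∀ x, μ (Ioi x) ≤ μ {t : ℝ | x < t ∧ (t : EReal) < b} + T := fun x =>
    (measure_mono fun t (ht : x < t) => (lt_or_ge (t : EReal) b).imp (⟨ht, ·⟩) id).trans
      (measure_union_le _ _)
  calc ∫⁻ x in {t : ℝ | a < t ∧ (t : EReal) < b}, μ (Ioi x) ^ r * sig p v a x ^ ρ ∂μ
      ≤ ∫⁻ x in {t : ℝ | a < t ∧ (t : EReal) < b}, 2 ^ r *
          (μ {t : ℝ | x < t ∧ (t : EReal) < b} ^ r * sig p v a x ^ ρ +
            T ^ r * sig p v a x ^ ρ) ∂μ := by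
        refine lintegral_mono fun x => ?_
        calc μ (Ioi x) ^ r * sig p v a x ^ ρ
            ≤ 2 ^ r * (μ {t : ℝ | x < t ∧ (t : EReal) < b} ^ r + T ^ r) *
                sig p v a x ^ ρ := by
              gcongr
              exact (rpow_le_rpow (hsplit x) hr.le).trans
                (add_rpow_le_two_rpow_mul_rpow_add_rpow _ _ hr.le)
          _ = _ := by ring
    _ = 2 ^ r * (∫⁻ x in {t : ℝ | a < t ∧ (t : EReal) < b},
          μ {t : ℝ | x < t ∧ (t : EReal) < b} ^ r * sig p v a x ^ ρ ∂μ +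
          T ^ r * ∫⁻ x in {t : ℝ | a < t ∧ (t : EReal) < b}, sig p v a x ^ ρ ∂μ) := by
        rw [lintegral_const_mul' _ _ (rpow_ne_top_of_nonneg hr.le ofNat_ne_top),
          lintegral_add_right _ (((measurable_sig hp v a).pow_const _).const_mul _),
          lintegral_const_mul _ ((measurable_sig hp v a).pow_const _)]
    _ ≤ _ := by
        gcongr 2 ^ r * (_ + ?_)
        exact measure_rpow_mul_lintegral_sig_le hp hq hr hρ ha hS

theorem lintegral_measure_Ioi_rpow_mul_sig_zero_le [NullSingletonClass μ] (hp : 1 ≤ p)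
    (hq : 0 < q) (hr : 0 < r) (hρ : ρ = q * (r + 1)) (ha : 0 ≤ a) :
    ∫⁻ x in {t : ℝ | a < t ∧ (t : EReal) < b}, μ (Ioi x) ^ r * sig p v 0 x ^ ρ ∂μ ≤
      comparisonConst r ρ *
        (∫⁻ x in {t : ℝ | a < t ∧ (t : EReal) < b},
            μ {t : ℝ | x < t ∧ (t : EReal) < b} ^ r * sig p v a x ^ ρ ∂μ +
          (⨆ t ∈ Ici a, μ (Ioi t) ^ (1 / q) * sig p v 0 t) ^ ρ) := by
  set S := ⨆ t ∈ Ici a, μ (Ioi t) ^ (1 / q) * sig p v 0 t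
  set R := ∫⁻ x in {t : ℝ | a < t ∧ (t : EReal) < b},
    μ {t : ℝ | x < t ∧ (t : EReal) < b} ^ r * sig p v a x ^ ρ ∂μ
  have hρ0 : 0 < ρ := hρ ▸ mul_pos hq (by linarith)
  rcases eq_or_ne S ⊤ with hS | hS
  · rw [hS, top_rpow_of_pos hρ0, add_top, mul_top (by simp [comparisonConst])]
    exact le_top
  calc ∫⁻ x in {t : ℝ | a < t ∧ (t : EReal) < b}, μ (Ioi x) ^ r * sig p v 0 x ^ ρ ∂μ
      ≤ ∫⁻ x in {t : ℝ | a < t ∧ (t : EReal) < b}, 2 ^ ρ *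
          (μ (Ioi x) ^ r * sig p v 0 a ^ ρ + μ (Ioi x) ^ r * sig p v a x ^ ρ) ∂μ := by
        refine lintegral_mono fun x => ?_
        calc μ (Ioi x) ^ r * sig p v 0 x ^ ρ
            ≤ μ (Ioi x) ^ r * (2 ^ ρ * (sig p v 0 a ^ ρ + sig p v a x ^ ρ)) := by
              gcongr
              exact (rpow_le_rpow (sig_le_add hp v 0 a x) hρ0.le).trans
                (add_rpow_le_two_rpow_mul_rpow_add_rpow _ _ hρ0.le)
          _ = _ := by ring
    _ = 2 ^ ρ * (∫⁻ x in {t : ℝ | a < t ∧ (t : EReal) < b},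
          μ (Ioi x) ^ r * sig p v 0 a ^ ρ ∂μ +
          ∫⁻ x in {t : ℝ | a < t ∧ (t : EReal) < b},
            μ (Ioi x) ^ r * sig p v a x ^ ρ ∂μ) := by
        rw [lintegral_const_mul' _ _ (rpow_ne_top_of_nonneg hρ0.le ofNat_ne_top),
          lintegral_add_left (((measurable_measure_Ioi μ).pow_const _).mul_const _)]
    _ ≤ 2 ^ ρ * (S ^ ρ + 2 ^ r * (R + dyadicConst r * S ^ ρ)) := by
        gcongr
        · exact lintegral_measure_Ioi_rpow_mul_sig_const_le hq hr.le hρ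
        · exact lintegral_measure_Ioi_rpow_mul_sig_le hp hq hr hρ ha hS
    _ ≤ 2 ^ ρ * ((R + S ^ ρ) + 2 ^ r * ((R + S ^ ρ) + dyadicConst r * (R + S ^ ρ))) := by
        gcongr
        · exact le_add_self
        · exact le_self_add
        · exact le_add_self
    _ = 2 ^ ρ * (1 + 2 ^ r * (1 + dyadicConst r)) * (R + S ^ ρ) := by ring

end Comparison

lemma setLIntegral_mul_mul_eq_withDensity {w f g : ℝ → ℝ≥0∞} (hw : Measurable w)
    (hf : Measurable f) (hg : Measurable g) {D : Set ℝ} (hD : MeasurableSet D) :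
    ∫⁻ x in D, f x * w x * g x = ∫⁻ x in D, f x * g x ∂volume.withDensity w := by
  rw [setLIntegral_withDensity_eq_setLIntegral_mul _ hw (g := fun x => f x * g x) (hf.mul hg) hD]
  exact setLIntegral_congr_fun hD fun x _ => by simp only [Pi.mul_apply]; ring

theorem lintegral_tail_rpow_mul_sig_zero_le {p q r ρ : ℝ} (hp : 1 ≤ p) (hq : 0 < q)
    (hr : 0 < r) (hρ : ρ = q * (r + 1)) (v : ℝ → ℝ≥0∞) {w : ℝ → ℝ≥0∞}
    (hw : Measurable w) {a : ℝ} (ha : 0 ≤ a) (b : EReal) :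
    ∫⁻ x in {t : ℝ | a < t ∧ (t : EReal) < b},
        (∫⁻ s in Ioi x, w s) ^ r * w x * sig p v 0 x ^ ρ ≤
      comparisonConst r ρ * ((∫⁻ x in {t : ℝ | a < t ∧ (t : EReal) < b},
          (∫⁻ s in {t : ℝ | x < t ∧ (t : EReal) < b}, w s) ^ r * w x * sig p v a x ^ ρ) +
        (⨆ t ∈ Ici a, (∫⁻ s in Ioi t, w s) ^ (1 / q) * sig p v 0 t) ^ ρ) := by
  have hD : MeasurableSet {t : ℝ | a < t ∧ (t : EReal) < b} :=
    measurableSet_Ioi.inter (measurableSet_lt measurable_coe_real_ereal measurable_const)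
  have key := lintegral_measure_Ioi_rpow_mul_sig_zero_le (μ := volume.withDensity w)
    (v := v) (b := b) hp hq hr hρ ha
  rw [← setLIntegral_mul_mul_eq_withDensity hw ((measurable_measure_Ioi _).pow_const _)
    ((measurable_sig hp v 0).pow_const _) hD, ← setLIntegral_mul_mul_eq_withDensity hw
    ((measurable_measure_setOf_lt_and _ _).pow_const _)
    ((measurable_sig hp v a).pow_const _) hD] at key
  simpa only [withDensity_apply'] using key

/-- For `1 ≤ p`, `0 < q < p`, weights `v, w` and `0 ≤ a < b ≤ ∞` (with `b` an extended real):
`(∫_a^b (∫_x^∞ w)^{q/(p−q)} w(x)[σ_p(0,x)]^{pq/(p−q)} dx)^{(p−q)/(pq)}` is bounded by a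
constant (depending only on `p, q`) times
`(∫_a^b (∫_x^b w)^{q/(p−q)} w(x) [σ_p(a,x)]^{pq/(p−q)} dx)^{(p−q)/(pq)}
  + sup_{t ∈ [a,∞)} (∫_t^∞ w)^{1/q} σ_p(0,t)`. -/
theorem stmt17 (p q : ℝ) (hp : 1 ≤ p) (hq : 0 < q) (hqp : q < p) :
    ∃ C : ℝ≥0∞, C < ∞ ∧
      ∀ v w : ℝ → ℝ≥0∞, IsWeight v → IsWeight w →
        ∀ a : ℝ, 0 ≤ a → ∀ b : EReal, (a : EReal) < b →
          (∫⁻ x in {t : ℝ | a < t ∧ (t : EReal) < b},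
              (∫⁻ s in Ioi x, w s) ^ (q / (p - q)) * w x *
                sig p v 0 x ^ (p * q / (p - q))) ^ ((p - q) / (p * q)) ≤
            C * ((∫⁻ x in {t : ℝ | a < t ∧ (t : EReal) < b},
                    (∫⁻ s in {t : ℝ | x < t ∧ (t : EReal) < b}, w s) ^ (q / (p - q)) * w x *
                      sig p v a x ^ (p * q / (p - q))) ^ ((p - q) / (p * q)) +
                 ⨆ t ∈ Ici a, (∫⁻ s in Ioi t, w s) ^ (1 / q) * sig p v 0 t) := by
  have hpq : 0 < p - q := by linarith
  have hr : 0 < q / (p - q) := div_pos hq hpq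
  have hρ : p * q / (p - q) = q * (q / (p - q) + 1) := by field_simp; ring
  have he : 0 < (p - q) / (p * q) := div_pos hpq (by positivity)
  have hρe : p * q / (p - q) * ((p - q) / (p * q)) = 1 := by field_simp
  have hM := comparisonConst_ne_top hr (hρ ▸ mul_nonneg hq.le (by linarith))
  refine ⟨comparisonConst (q / (p - q)) (p * q / (p - q)) ^ ((p - q) / (p * q)) *
      2 ^ ((p - q) / (p * q)),
    mul_lt_top (rpow_lt_top_of_nonneg he.le hM) (rpow_lt_top_of_nonneg he.le ofNat_ne_top),
    fun v w _ hw a ha b _ => rpow_le_mul_add_of_le_mul_add_rpow he hρe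
      (lintegral_tail_rpow_mul_sig_zero_le hp hq hr hρ v hw.1 ha b)⟩
end
end
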